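/- arXiv:2008.04565 — 4 statements merged into one kernel-verified Lean document; each statement's English description precedes it below -/
import Mathlib

section
/- Epigraphical relaxation for a two-layer composition preserves minimizers: let f^(2) : ℝ^M → ℝ_+ be convex and strictly increasing on ℝ_+^M, f^(1) : ℝ^{N_1} → ℝ_+^M a convex block-wise vector function, A a matrix, and g a proper lsc convex coercive function. If (x*, z*) minimizes f^(2)(z) + g(x) subject to f^(1)(Ax) ≤ z (componentwise), then f^(1)(Ax*) = z*; consequently x* minimizes f^(2)(f^(1)(Ax)) + g(x). -/
open Finset

/-- Epigraphical relaxation for a two-layer composition preserves minimizers: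
if `f²` is convex, nonnegative and strictly increasing on the nonnegative
orthant, `f¹` is a convex nonnegative vector-valued function, `g` is a proper
(real-valued) lsc convex coercive function, and `(x*, z*)` minimizes
`f²(z) + g(x)` subject to `f¹(Ax) ≤ z`, then `f¹(Ax*) = z*` and `x*`
minimizes `f²(f¹(Ax)) + g(x)`. -/
theorem epigraphical_relaxation_two_layer
    {N N₁ M : ℕ}
    (f₂ : (Fin M → ℝ) → ℝ) (f₁ : (Fin N₁ → ℝ) → (Fin M → ℝ))
    (A : Matrix (Fin N₁) (Fin N) ℝ) (g : (Fin N → ℝ) → ℝ)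
    (hf₂_convex : ConvexOn ℝ Set.univ f₂)
    (hf₂_nonneg : ∀ z, 0 ≤ f₂ z)
    (hf₂_strict : ∀ u v : Fin M → ℝ, 0 ≤ u → u ≤ v →
      ∀ n₀ : Fin M, u n₀ < v n₀ → f₂ u < f₂ v)
    (hf₁_convex : ∀ x y : Fin N₁ → ℝ, ∀ α : ℝ, 0 ≤ α → α ≤ 1 →
      f₁ (α • x + (1 - α) • y) ≤ α • f₁ x + (1 - α) • f₁ y)
    (hf₁_nonneg : ∀ x, 0 ≤ f₁ x)
    (hg_convex : ConvexOn ℝ Set.univ g)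
    (hg_lsc : LowerSemicontinuous g)
    (hg_coercive : Filter.Tendsto g (Bornology.cobounded (Fin N → ℝ)) Filter.atTop)
    (xstar : Fin N → ℝ) (zstar : Fin M → ℝ)
    (hfeas : f₁ (A.mulVec xstar) ≤ zstar)
    (hmin : ∀ (x : Fin N → ℝ) (z : Fin M → ℝ), f₁ (A.mulVec x) ≤ z →
      f₂ zstar + g xstar ≤ f₂ z + g x) :
    f₁ (A.mulVec xstar) = zstar ∧
    ∀ x : Fin N → ℝ,
      f₂ (f₁ (A.mulVec xstar)) + g xstar ≤ f₂ (f₁ (A.mulVec x)) + g x := by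
  have heq : f₁ (A.mulVec xstar) = zstar := by
    by_contra h
    obtain ⟨n₀, hn₀⟩ : ∃ n₀, f₁ (A.mulVec xstar) n₀ < zstar n₀ := by
      by_contra hc
      push_neg at hc
      exact h (le_antisymm hfeas (fun i => hc i))
    have hlt := hf₂_strict (f₁ (A.mulVec xstar)) zstar (hf₁_nonneg _) hfeas n₀ hn₀
    have := hmin xstar (f₁ (A.mulVec xstar)) le_rfl
    linarith
  refine ⟨heq, fun x => ?_⟩
  rw [heq]
  exact hmin x (f₁ (A.mulVec x)) le_rfl
end

section
/- General epigraphical relaxation theorem: let f^(k) : ℝ^{N_k} → ℝ_+^{N_{k+1}} for 1 ≤ k ≤ K (with ℝ_+^{N_{K+1}} = ℝ_+) be convex block-wise vector functions, with f^(k) strictly increasing on ℝ_+^{N_k} for 2 ≤ k ≤ K, and let g be proper lsc convex and coercive. If (x*, z*^(2), ..., z*^(K)) minimizes f^(K)(z^(K)) + g(x) subject to f^(k)(z^(k)) ≤ z^(k+1) for 2 ≤ k ≤ K-1 and f^(1)(Ax) ≤ z^(2) (all inequalities componentwise), then all inequalities hold with equality at the minimizer: f^(k)(z*^(k)) = z*^(k+1)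 for 2 ≤ k ≤ K-1 and f^(1)(Ax*) = z*^(2). Hence x* also minimizes the original problem min_x f^(K)∘⋯∘f^(1)(Ax) + g(x). -/
open Finset

/-- The `k`-fold composition `f (k-1) ∘ ⋯ ∘ f 0` of a chain of
vector-valued functions `f k : ℝ^{N k} → ℝ^{N (k+1)}`. -/
def layerComp {N : ℕ → ℕ} (f : (k : ℕ) → (Fin (N k) → ℝ) → (Fin (N (k + 1)) → ℝ)) :
    (k : ℕ) → (Fin (N 0) → ℝ) → (Fin (N k) → ℝ)
  | 0, x => x
  | k + 1, x => f k (layerComp f k x)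

theorem layerComp_succ {N : ℕ → ℕ} (f : (k : ℕ) → (Fin (N k) → ℝ) → (Fin (N (k + 1)) → ℝ))
    (k : ℕ) (x : Fin (N 0) → ℝ) :
    layerComp f (k + 1) x = f k (layerComp f k x) := rfl

/-- General epigraphical relaxation theorem.  The paper's layer functions
`f^(1), …, f^(K-1)` are here `f 0, …, f (K-2)` and `f^(K)` is `F`; the
auxiliary variables `z^(2), …, z^(K)` are `z 1, …, z (K-1)` with
`z k : ℝ^{N k}`.  If the layer functions are convex, nonnegative-valued,
and (except possibly the innermost `f 0`) strictly increasing on the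
nonnegative orthant, `g` is (real-valued, hence proper) lsc convex and
coercive, and `(x*, z*)` minimizes the relaxed problem
`min F(z^(K)) + g(x)` s.t. `f 0 (Ax) ≤ z 1`, `f k (z k) ≤ z (k+1)`,
then all the relaxed inequality constraints hold with equality at the
minimizer, and `x*` minimizes the original layered problem
`min F(f (K-2) ∘ ⋯ ∘ f 0 (Ax)) + g(x)`. -/
theorem epigraphical_relaxation_general
    {N : ℕ → ℕ} {Nx : ℕ} (K : ℕ) (hK : 2 ≤ K)
    (f : (k : ℕ) → (Fin (N k) → ℝ) → (Fin (N (k + 1)) → ℝ))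
    (F : (Fin (N (K - 1)) → ℝ) → ℝ)
    (A : Matrix (Fin (N 0)) (Fin Nx) ℝ) (g : (Fin Nx → ℝ) → ℝ)
    (hf_convex : ∀ k, k ≤ K - 2 → ∀ x y : Fin (N k) → ℝ, ∀ α : ℝ, 0 ≤ α → α ≤ 1 →
      f k (α • x + (1 - α) • y) ≤ α • f k x + (1 - α) • f k y)
    (hf_nonneg : ∀ k, k ≤ K - 2 → ∀ x : Fin (N k) → ℝ, 0 ≤ f k x)
    (hf_strict : ∀ k, 1 ≤ k → k ≤ K - 2 → ∀ u v : Fin (N k) → ℝ,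
      0 ≤ u → u ≤ v → u ≠ v → f k u ≤ f k v ∧ f k u ≠ f k v)
    (hF_convex : ConvexOn ℝ Set.univ F)
    (hF_nonneg : ∀ z, 0 ≤ F z)
    (hF_strict : ∀ u v : Fin (N (K - 1)) → ℝ, 0 ≤ u → u ≤ v → u ≠ v → F u < F v)
    (hg_convex : ConvexOn ℝ Set.univ g)
    (hg_lsc : LowerSemicontinuous g)
    (hg_coercive : Filter.Tendsto g (Bornology.cobounded (Fin Nx → ℝ)) Filter.atTop)
    (xstar : Fin Nx → ℝ) (zstar : (k : ℕ) → Fin (N k) → ℝ)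
    (hfeas₁ : f 0 (A.mulVec xstar) ≤ zstar 1)
    (hfeas₂ : ∀ k, 1 ≤ k → k ≤ K - 2 → f k (zstar k) ≤ zstar (k + 1))
    (hmin : ∀ (x : Fin Nx → ℝ) (z : (k : ℕ) → Fin (N k) → ℝ),
      f 0 (A.mulVec x) ≤ z 1 →
      (∀ k, 1 ≤ k → k ≤ K - 2 → f k (z k) ≤ z (k + 1)) →
      F (zstar (K - 1)) + g xstar ≤ F (z (K - 1)) + g x) :
    f 0 (A.mulVec xstar) = zstar 1 ∧
    (∀ k, 1 ≤ k → k ≤ K - 2 → f k (zstar k) = zstar (k + 1)) ∧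
    ∀ x : Fin Nx → ℝ,
      F (layerComp f (K - 1) (A.mulVec xstar)) + g xstar ≤
        F (layerComp f (K - 1) (A.mulVec x)) + g x := by

  set L : (k : ℕ) → Fin (N k) → ℝ := fun k => layerComp f k (A.mulVec xstar) with hL
  -- nonnegativity of the tight chain
  have hLnn : ∀ j, 1 ≤ j → j ≤ K - 1 → (0 : Fin (N j) → ℝ) ≤ L j := by
    intro j hj1 hj2
    obtain ⟨m, rfl⟩ : ∃ m, j = m + 1 := ⟨j - 1, by omega⟩
    simp only [hL, layerComp_succ]
    exact hf_nonneg m (by omega) _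
  -- the tight chain is below zstar
  have hle : ∀ j, 1 ≤ j → j ≤ K - 1 → L j ≤ zstar j := by
    intro j
    induction j with
    | zero => omega
    | succ m ih =>
      intro _ hj2
      rcases Nat.eq_zero_or_pos m with rfl | hm
      · exact hfeas₁
      · have hm2 : m ≤ K - 2 := by omega
        have ihm : L m ≤ zstar m := ih hm (by omega)
        by_cases heq : L m = zstar m
        · simp only [hL, layerComp_succ]
          rw [show layerComp f m (A.mulVec xstar) = zstar m from heq]
          exact hfeas₂ m hm hm2
        · have hs := hf_strict m hm hm2 (L m) (zstar m)
            (hLnn m hm (by omega)) ihm heq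
          exact le_trans hs.1 (hfeas₂ m hm hm2)
  -- a strict gap propagates to the last layer
  have hne : ∀ j, 1 ≤ j → j ≤ K - 1 → L j ≠ zstar j →
      ∀ m, j ≤ m → m ≤ K - 1 → L m ≠ zstar m := by
    intro j hj1 hj2 hjne m hjm
    induction m, hjm using Nat.le_induction with
    | base => intro _; exact hjne
    | succ m hjm ih =>
      intro hm2
      have hm1 : 1 ≤ m := by omega
      have hmK : m ≤ K - 2 := by omega
      have hne' : L m ≠ zstar m := ih (by omega)
      have hs := hf_strict m hm1 hmK (L m) (zstar m)
        (hLnn m hm1 (by omega)) (hle m hm1 (by omega)) hne'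
      intro hcon
      apply hs.2
      apply le_antisymm hs.1
      simp only [hL, layerComp_succ] at hcon
      rw [hcon]
      exact hfeas₂ m hm1 hmK
  -- the tight chain is feasible, so by optimality the last layers agree
  have hKm1 : 1 ≤ K - 1 := by omega
  have hmin' := hmin xstar L (le_of_eq rfl)
    (fun k hk1 hk2 => le_of_eq rfl)
  have hFle : F (zstar (K-1)) ≤ F (L (K-1)) := by linarith
  have hlast : L (K-1) = zstar (K-1) := by
    by_contra hcon
    exact absurd hFle (not_le.mpr
      (hF_strict _ _ (hLnn _ hKm1 le_rfl) (hle _ hKm1 le_rfl) hcon))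
  have hall : ∀ j, 1 ≤ j → j ≤ K - 1 → L j = zstar j := by
    intro j hj1 hj2
    by_contra hcon
    exact hne j hj1 hj2 hcon (K-1) hj2 le_rfl hlast
  refine ⟨hall 1 le_rfl hKm1, ?_, ?_⟩
  · intro k hk1 hk2
    have h1 : L k = zstar k := hall k hk1 (by omega)
    have h2 : L (k+1) = zstar (k+1) := hall (k+1) (by omega) (by omega)
    rw [← h1, ← h2]; rfl
  · intro x
    have := hmin x (fun k => layerComp f k (A.mulVec x)) (le_of_eq rfl)
      (fun k hk1 hk2 => le_of_eq rfl)
    rw [show zstar (K-1) = L (K-1) from hlast.symm] at this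
    exact this
end

section
/- Characterization of projection onto the epigraph of the ℓ_1 norm: for (x, ξ) ∈ ℝ^N × ℝ with ‖x‖_1 > ξ, the Euclidean projection of (x, ξ) onto epi_{‖·‖_1} = {(v, η) : ‖v‖_1 ≤ η} equals (T_{λ*}(x), ξ + λ*), where T_λ is soft-thresholding and λ* is a positive root of the non-increasing function φ(λ) = ‖T_λ(x)‖_1 - λ - ξ. -/
open Finset

/-!
The residual `(x - T_λ x, -λ)` of `(x, ξ)` at `(T_λ x, ξ + λ)` is a normal vector of the
epigraph there. Its `x`-part has all coordinates in `[-λ, λ]` and pairs with `T_λ x` to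
exactly `λ ‖T_λ x‖₁`; by Hölder the residual therefore pairs with every `(v, η)` with
`‖v‖₁ ≤ η` to at most `0`, and with the candidate to exactly `0` by the root condition
`‖T_λ x‖₁ = ξ + λ`. Expanding the squared distance as in Pythagoras gives minimality.
-/

/-- The `ℓ_1` norm on `Fin N → ℝ`. -/
def l1norm {N : ℕ} (x : Fin N → ℝ) : ℝ := ∑ n, |x n|

/-- The soft-thresholding operator `[T_λ(x)]_n = sign(x_n)·max{|x_n| - λ, 0}`. -/
noncomputable def softThresh {N : ℕ} (lam : ℝ) (x : Fin N → ℝ) : Fin N → ℝ :=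
  fun n => Real.sign (x n) * max (|x n| - lam) 0

/-- Squared Euclidean distance on `ℝ^N × ℝ`. -/
def distSq {N : ℕ} (p q : (Fin N → ℝ) × ℝ) : ℝ :=
  (∑ n, (p.1 n - q.1 n) ^ 2) + (p.2 - q.2) ^ 2

lemma distSq_nonneg {N : ℕ} (p q : (Fin N → ℝ) × ℝ) : 0 ≤ distSq p q := by
  unfold distSq
  positivity

lemma distSq_eq_add_add_inner {N : ℕ} (z p q : (Fin N → ℝ) × ℝ) :
    distSq z q = distSq z p + distSq p q
      + 2 * ((z.1 - p.1) ⬝ᵥ (p.1 - q.1) + (z.2 - p.2) * (p.2 - q.2)) := by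
  have hsum : ∑ n, (z.1 n - q.1 n) ^ 2 = ∑ n, ((z.1 n - p.1 n) ^ 2 + (p.1 n - q.1 n) ^ 2
      + 2 * ((z.1 n - p.1 n) * (p.1 n - q.1 n))) :=
    sum_congr rfl fun n _ => by ring
  rw [distSq, distSq, distSq, hsum, sum_add_distrib, sum_add_distrib, ← mul_sum]
  simp only [dotProduct, Pi.sub_apply]
  ring

lemma distSq_le_of_inner_nonneg {N : ℕ} {z p q : (Fin N → ℝ) × ℝ}
    (h : 0 ≤ (z.1 - p.1) ⬝ᵥ (p.1 - q.1) + (z.2 - p.2) * (p.2 - q.2)) :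
    distSq z p ≤ distSq z q := by
  rw [distSq_eq_add_add_inner z p q]
  linarith [distSq_nonneg p q]

lemma dotProduct_le_mul_l1norm {N : ℕ} {r : Fin N → ℝ} {lam : ℝ} (hr : ∀ n, |r n| ≤ lam)
    (v : Fin N → ℝ) : r ⬝ᵥ v ≤ lam * l1norm v := by
  rw [dotProduct, l1norm, mul_sum]
  refine sum_le_sum fun n _ => ?_
  calc r n * v n ≤ |r n| * |v n| := by rw [← abs_mul]; exact le_abs_self _
    _ ≤ lam * |v n| := mul_le_mul_of_nonneg_right (hr n) (abs_nonneg _)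

section softThresh

variable {N : ℕ} {lam : ℝ}

lemma abs_sub_softThresh_le (hlam : 0 ≤ lam) (x : Fin N → ℝ) (n : Fin N) :
    |x n - softThresh lam x n| ≤ lam := by
  simp only [softThresh]
  rcases le_or_gt (|x n|) lam with hsmall | hlarge
  · rw [max_eq_right (by linarith), mul_zero, sub_zero]
    exact hsmall
  · rw [max_eq_left (by linarith)]
    rcases lt_trichotomy (x n) 0 with hneg | hzero | hpos
    · rw [Real.sign_of_neg hneg, abs_of_neg hneg, abs_le]
      constructor <;> linarith
    · simp [hzero, hlam]
    · rw [Real.sign_of_pos hpos, abs_of_pos hpos, abs_le]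
      constructor <;> linarith

lemma sub_softThresh_mul_softThresh (x : Fin N → ℝ) (n : Fin N) :
    (x n - softThresh lam x n) * softThresh lam x n = lam * |softThresh lam x n| := by
  simp only [softThresh]
  rcases le_or_gt (|x n|) lam with hsmall | hlarge
  · simp [max_eq_right (sub_nonpos.mpr hsmall)]
  · rw [max_eq_left (by linarith)]
    rcases lt_trichotomy (x n) 0 with hneg | hzero | hpos
    · rw [abs_of_neg hneg] at hlarge ⊢
      rw [Real.sign_of_neg hneg, abs_of_nonpos (by linarith : -1 * (-x n - lam) ≤ 0)]
      ring
    · simp [hzero]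
    · rw [abs_of_pos hpos] at hlarge ⊢
      rw [Real.sign_of_pos hpos, abs_of_nonneg (by linarith : 0 ≤ 1 * (x n - lam))]
      ring

lemma sub_softThresh_dotProduct_softThresh (x : Fin N → ℝ) :
    (x - softThresh lam x) ⬝ᵥ softThresh lam x = lam * l1norm (softThresh lam x) := by
  simp only [dotProduct, Pi.sub_apply, sub_softThresh_mul_softThresh, l1norm, mul_sum]

end softThresh

theorem projection_epigraph_l1_general
    {N : ℕ} (x : Fin N → ℝ) (ξ : ℝ)
    (lam : ℝ) (hlam_pos : 0 < lam)
    (hroot : l1norm (softThresh lam x) - lam - ξ = 0) :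
    let C : Set ((Fin N → ℝ) × ℝ) := {p | l1norm p.1 ≤ p.2}
    let pr : (Fin N → ℝ) × ℝ := (softThresh lam x, ξ + lam)
    pr ∈ C ∧ ∀ q ∈ C, distSq (x, ξ) pr ≤ distSq (x, ξ) q := by
  intro C pr
  have hnorm : l1norm (softThresh lam x) = ξ + lam := by linarith
  refine ⟨hnorm.le, ?_⟩
  rintro ⟨v, η⟩ (hv : l1norm v ≤ η)
  apply distSq_le_of_inner_nonneg
  have hholder :=
    dotProduct_le_mul_l1norm (r := x - softThresh lam x) (abs_sub_softThresh_le hlam_pos.le x) v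
  simp only [pr, dotProduct_sub, sub_softThresh_dotProduct_softThresh, hnorm]
  linarith [mul_le_mul_of_nonneg_left hv hlam_pos.le]

/-- Projection onto the epigraph of the `ℓ_1` norm: if `‖x‖_1 > ξ` and `λ* > 0`
is a root of `φ(λ) = ‖T_λ(x)‖_1 - λ - ξ`, then the Euclidean projection of
`(x, ξ)` onto `{(v, η) : ‖v‖_1 ≤ η}` is `(T_{λ*}(x), ξ + λ*)` (the point of
the epigraph minimizing the distance to `(x, ξ)`). -/
theorem projection_epigraph_l1
    {N : ℕ} (x : Fin N → ℝ) (ξ : ℝ) (hxξ : ξ < l1norm x)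
    (lam : ℝ) (hlam_pos : 0 < lam)
    (hroot : l1norm (softThresh lam x) - lam - ξ = 0) :
    let C : Set ((Fin N → ℝ) × ℝ) := {p | l1norm p.1 ≤ p.2}
    let pr : (Fin N → ℝ) × ℝ := (softThresh lam x, ξ + lam)
    pr ∈ C ∧ ∀ q ∈ C, distSq (x, ξ) pr ≤ distSq (x, ξ) q :=
  projection_epigraph_l1_general x ξ lam hlam_pos hroot
end

section
/- Closed-form root of the ℓ_1-epigraphical projection equation: let x ∈ ℝ^N, ξ ∈ ℝ, and let ρ order the entries so |x_{ρ(1)}| ≥ ⋯ ≥ |x_{ρ(N)}|, with x_{ρ(N+1)} := 0 and S_{N_0} = Σ_{n=1}^{N_0} |x_{ρ(n)}|. Then the positive root λ* of φ(λ) = ‖T_λ(x)‖_1 - λ - ξ is given by λ* = -ξ if ξ < -|x_{ρ(1)}|, and λ* = (S_{N_0} - ξ)/(N_0 + 1) when S_{N_0} - (N_0+1)|x_{ρ(N_0)}| ≤ ξ < S_{N_0} - (N_0+1)|x_{ρ(N_0+1)}| for some 1 ≤ N_0 ≤ N. -/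
open Finset

/-- The sequence `n ↦ |x_{ρ(n+1)}|` (0-indexed) of absolute values of the
entries of `x` reordered by `ρ`, extended by `0` beyond the last index
(the convention `x_{ρ(N+1)} := 0`). -/
noncomputable def sortedAbs {N : ℕ} (x : Fin N → ℝ) (ρ : Equiv.Perm (Fin N)) : ℕ → ℝ :=
  fun n => if h : n < N then |x (ρ ⟨n, h⟩)| else 0


lemma sortedAbs_nonneg {N : ℕ} (x : Fin N → ℝ) (ρ : Equiv.Perm (Fin N)) (n : ℕ) :
    0 ≤ sortedAbs x ρ n := by
  unfold sortedAbs; split <;> positivity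

lemma l1_soft {N : ℕ} (lam : ℝ) (hlam : 0 ≤ lam) (x : Fin N → ℝ) :
    l1norm (softThresh lam x) = ∑ n, max (|x n| - lam) 0 := by
  unfold l1norm softThresh
  refine Finset.sum_congr rfl fun n _ => ?_
  rcases eq_or_ne (x n) 0 with h | h
  · simp [h, max_eq_right, hlam]
  · rw [abs_mul, abs_of_nonneg (le_max_right (|x n| - lam) 0)]
    rcases lt_or_gt_of_ne h with h' | h'
    · rw [Real.sign_of_neg h']; norm_num
    · rw [Real.sign_of_pos h']; norm_num

lemma sum_reindex {N : ℕ} (lam : ℝ) (x : Fin N → ℝ) (ρ : Equiv.Perm (Fin N)) :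
    ∑ n, max (|x n| - lam) 0 = ∑ n ∈ Finset.range N, max (sortedAbs x ρ n - lam) 0 := by
  rw [← Equiv.sum_comp ρ (fun n => max (|x n| - lam) 0), Finset.sum_range]
  refine Finset.sum_congr rfl fun n _ => ?_
  simp [sortedAbs, n.isLt]

/-- Closed-form root of the `ℓ_1`-epigraphical projection equation
`φ(λ) = ‖T_λ(x)‖_1 - λ - ξ = 0`: with the entries sorted in decreasing
absolute value (`a n = |x_{ρ(n+1)}|`, `S N₀ = Σ_{n<N₀} a n`), the positive
root is `λ* = -ξ` when `ξ < -|x_{ρ(1)}|`, and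
`λ* = (S N₀ - ξ)/(N₀+1)` when
`S N₀ - (N₀+1)|x_{ρ(N₀)}| ≤ ξ < S N₀ - (N₀+1)|x_{ρ(N₀+1)}|` for some
`1 ≤ N₀ ≤ N`. -/
theorem l1_epigraphical_projection_root_closed_form
    {N : ℕ} (x : Fin N → ℝ) (ξ : ℝ) (ρ : Equiv.Perm (Fin N))
    (hsorted : ∀ m n : ℕ, m ≤ n → sortedAbs x ρ n ≤ sortedAbs x ρ m) :
    let a : ℕ → ℝ := sortedAbs x ρ
    let S : ℕ → ℝ := fun N₀ => ∑ n ∈ Finset.range N₀, a n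
    let φ : ℝ → ℝ := fun lam => l1norm (softThresh lam x) - lam - ξ
    (ξ < -(a 0) → 0 < -ξ ∧ φ (-ξ) = 0) ∧
    (∀ N₀ : ℕ, 1 ≤ N₀ → N₀ ≤ N →
      S N₀ - ((N₀ : ℝ) + 1) * a (N₀ - 1) ≤ ξ →
      ξ < S N₀ - ((N₀ : ℝ) + 1) * a N₀ →
      0 < (S N₀ - ξ) / ((N₀ : ℝ) + 1) ∧ φ ((S N₀ - ξ) / ((N₀ : ℝ) + 1)) = 0) := by
  intro a S φ
  constructor
  · intro hξ
    have ha0 : 0 ≤ a 0 := sortedAbs_nonneg x ρ 0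
    have hpos : 0 < -ξ := lt_of_le_of_lt ha0 (by linarith)
    refine ⟨hpos, ?_⟩
    show l1norm (softThresh (-ξ) x) - (-ξ) - ξ = 0
    rw [l1_soft _ hpos.le, sum_reindex _ x ρ]
    have hz : ∀ n ∈ Finset.range N, max (sortedAbs x ρ n - (-ξ)) 0 = 0 := by
      intro n _
      have h1 : sortedAbs x ρ n ≤ a 0 := hsorted 0 n (Nat.zero_le n)
      rw [max_eq_right (by linarith)]
    rw [Finset.sum_congr rfl hz, Finset.sum_const_zero]; ring
  · intro N₀ h1 h2 hle hlt
    set lam := (S N₀ - ξ) / ((N₀:ℝ)+1) with hlam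
    have hN₀pos : (0:ℝ) < (N₀:ℝ)+1 := by positivity
    have haN₀ : 0 ≤ a N₀ := sortedAbs_nonneg x ρ N₀
    have hlam_gt : a N₀ < lam := by
      rw [hlam, lt_div_iff₀ hN₀pos]; linarith
    have hpos : 0 < lam := lt_of_le_of_lt haN₀ hlam_gt
    refine ⟨hpos, ?_⟩
    have hlam_le : lam ≤ a (N₀ - 1) := by
      rw [hlam, div_le_iff₀ hN₀pos]; linarith
    show l1norm (softThresh lam x) - lam - ξ = 0
    rw [l1_soft _ hpos.le, sum_reindex _ x ρ]
    rw [Finset.range_eq_Ico, ← Finset.sum_Ico_consecutive _ (Nat.zero_le N₀) h2]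
    have hA : ∑ n ∈ Finset.Ico 0 N₀, max (sortedAbs x ρ n - lam) 0 = S N₀ - N₀ * lam := by
      rw [← Finset.range_eq_Ico]
      have hc : ∀ n ∈ Finset.range N₀, max (sortedAbs x ρ n - lam) 0 = sortedAbs x ρ n - lam := by
        intro n hn
        have h3 : a (N₀ - 1) ≤ sortedAbs x ρ n :=
          hsorted n (N₀-1) (Nat.le_sub_one_of_lt (Finset.mem_range.mp hn))
        rw [max_eq_left (by linarith)]
      rw [Finset.sum_congr rfl hc, Finset.sum_sub_distrib, Finset.sum_const, Finset.card_range,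
        nsmul_eq_mul]
    have hB : ∑ n ∈ Finset.Ico N₀ N, max (sortedAbs x ρ n - lam) 0 = 0 := by
      apply Finset.sum_eq_zero
      intro n hn
      have h3 : sortedAbs x ρ n ≤ a N₀ := hsorted N₀ n (Finset.mem_Ico.mp hn).1
      rw [max_eq_right (by linarith)]
    rw [hA, hB, hlam]
    field_simp
    ring
end
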